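/- arXiv:1509.04374 — 6 statements merged into one kernel-verified Lean document; each statement's English description precedes it below -/
import Mathlib

section
/- Let R be a Noetherian commutative ring and let M and N be finitely generated R-modules with N ≠ 0. Then surj_N(M) is finite, i.e., the set of natural numbers n for which there exists a surjective R-linear map M → N^{⊕n} is bounded above. -/
/-!
Pick a prime `p` in the support of `N`. Base change to the residue field `κ(p)` turns a
surjection `M → Nⁿ` into a surjection of `κ(p)`-vector spaces `κ(p) ⊗ M → (κ(p) ⊗ N)ⁿ`, and
`κ(p) ⊗ N ≠ 0` by Nakayama, so `n ≤ dim κ(p) ⊗ M`.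
-/

open TensorProduct

theorem le_finrank_of_surjective_pi {K V W : Type*} [DivisionRing K]
    [AddCommGroup V] [Module K V] [Module.Finite K V] [Nontrivial V]
    [AddCommGroup W] [Module K W] [Module.Finite K W]
    {n : ℕ} {f : W →ₗ[K] (Fin n → V)} (hf : Function.Surjective f) :
    n ≤ Module.finrank K W :=
  calc n ≤ n * Module.finrank K V := Nat.le_mul_of_pos_right n Module.finrank_pos
    _ = Module.finrank K (Fin n → V) := by simp [Module.finrank_pi_fintype]
    _ ≤ Module.finrank K W := LinearMap.finrank_le_finrank_of_surjective hf

theorem le_finrank_residueField_tensorProduct_of_surjective_pi {R M N : Type*} [CommRing R]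
    [AddCommGroup M] [Module R M] [Module.Finite R M]
    [AddCommGroup N] [Module R N] [Module.Finite R N]
    {p : PrimeSpectrum R} (hp : p ∈ Module.support R N)
    {n : ℕ} {f : M →ₗ[R] (Fin n → N)} (hf : Function.Surjective f) :
    n ≤ Module.finrank p.asIdeal.ResidueField (p.asIdeal.ResidueField ⊗[R] M) := by
  let K := p.asIdeal.ResidueField
  have : Nontrivial (K ⊗[R] N) :=
    (Module.mem_support_iff_nontrivial_residueField_tensorProduct p).mp hp
  let g : K ⊗[R] M →ₗ[K] (Fin n → K ⊗[R] N) :=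
    (piRight R K K fun _ : Fin n ↦ N).toLinearMap ∘ₗ f.baseChange K
  exact le_finrank_of_surjective_pi (f := g)
    ((piRight R K K _).surjective.comp (LinearMap.baseChange_surjective K hf))

theorem surjNum_finite_general
    {R : Type*} [CommRing R]
    {M N : Type*} [AddCommGroup M] [Module R M] [AddCommGroup N] [Module R N]
    [Module.Finite R M] [Module.Finite R N] (hN : Nontrivial N) :
    ∃ B : ℕ, ∀ n : ℕ,
      (∃ f : M →ₗ[R] (Fin n → N), Function.Surjective f) → n ≤ B := by
  obtain ⟨p, hp⟩ := Module.nonempty_support_of_nontrivial (R := R) (M := N)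
  exact ⟨_, fun _ ⟨_, hf⟩ ↦ le_finrank_residueField_tensorProduct_of_surjective_pi hp hf⟩

/-- Over a Noetherian ring, for finitely generated modules `M`, `N` with `N ≠ 0`,
the surjective number `surj_N(M)` is finite: the set of `n` such that there is a
surjective `R`-linear map `M → N^{⊕n}` is bounded above. -/
theorem surjNum_finite
    {R : Type*} [CommRing R] [IsNoetherianRing R]
    {M N : Type*} [AddCommGroup M] [Module R M] [AddCommGroup N] [Module R N]
    [Module.Finite R M] [Module.Finite R N] (hN : Nontrivial N) :
    ∃ B : ℕ, ∀ n : ℕ,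
      (∃ f : M →ₗ[R] (Fin n → N), Function.Surjective f) → n ≤ B :=
  surjNum_finite_general hN
end

section
/- Let R be a Noetherian commutative ring and let M and N be finitely generated R-modules with N ≠ 0. Then the limit lim_{r→∞} surj_N(M^{⊕r})/r exists; that is, there exists a real number L such that the sequence r ↦ (surj_N(M^{⊕r}) : ℝ)/r tends to L as r → ∞. -/
/-!
Composing a surjection `M^r → N^n` with a simple quotient `N → R ⧸ 𝔪` in each coordinate gives a
surjection onto the `R ⧸ 𝔪`-vector space `(R ⧸ 𝔪)^n`, so `n` is at most the number of generators
of `M^r`, which is linear in `r`. Direct sums of surjections make `r ↦ surj_N(M^r)` superadditive,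
and Fekete's lemma gives the limit.
-/

/-- The surjective number `surj_N(M)`: the largest `n` such that there is a
surjective `R`-linear map `M → N^{⊕n}` (the direct sum of `n` copies of `N`). -/
noncomputable def surjNum (R M N : Type*) [CommRing R] [AddCommGroup M] [Module R M]
    [AddCommGroup N] [Module R N] : ℕ :=
  sSup {n : ℕ | ∃ f : M →ₗ[R] (Fin n → N), Function.Surjective f}

open Module Submodule

theorem Module.exists_surjective_quotient_isMaximal {R N : Type*} [CommRing R] [AddCommGroup N]
    [Module R N] [Module.Finite R N] [Nontrivial N] :
    ∃ (m : Ideal R) (_ : m.IsMaximal) (π : N →ₗ[R] R ⧸ m), Function.Surjective π := by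
  obtain ⟨p, hp⟩ := IsCoatomic.exists_coatom (Submodule R N)
  obtain ⟨m, hm, ⟨e⟩⟩ := isSimpleModule_iff_quot_maximal.mp (isSimpleModule_iff_isCoatom.mpr hp)
  exact ⟨m, hm, e.toLinearMap ∘ₗ p.mkQ, e.surjective.comp p.mkQ_surjective⟩

theorem finrank_le_card_of_span_eq_top {R K V ι : Type*} [CommRing R] [Field K] [Algebra R K]
    (hK : Function.Surjective (algebraMap R K)) [AddCommGroup V] [Module R V] [Module K V]
    [IsScalarTower R K V] [Fintype ι] {w : ι → V} (hw : span R (Set.range w) = ⊤) :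
    finrank K V ≤ Fintype.card ι := by
  have hspan : span K (Set.range w) = ⊤ := by
    rw [← restrictScalars_eq_top_iff R, restrictScalars_span R K hK, hw]
  rw [← finrank_top, ← hspan]
  exact finrank_range_le_card w

section surjNum

variable {R M M' N : Type*} [CommRing R] [AddCommGroup M] [Module R M] [AddCommGroup M']
  [Module R M'] [AddCommGroup N] [Module R N]

theorem le_card_of_surjective_pi [Module.Finite R N] [Nontrivial N] {ι : Type*} [Fintype ι]
    {s : ι → M} (hs : span R (Set.range s) = ⊤) {n : ℕ} {f : M →ₗ[R] (Fin n → N)}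
    (hf : Function.Surjective f) : n ≤ Fintype.card ι := by
  obtain ⟨m, _, π, hπ⟩ := Module.exists_surjective_quotient_isMaximal (R := R) (N := N)
  let _ := Ideal.Quotient.field m
  let φ := LinearMap.compLeft π (Fin n) ∘ₗ f
  have hφ : Function.Surjective φ := hπ.comp_left.comp hf
  have hspan : span R (Set.range (φ ∘ s)) = ⊤ := by
    rw [Set.range_comp, ← map_span, hs, Submodule.map_top, LinearMap.range_eq_top.mpr hφ]
  simpa using finrank_le_card_of_span_eq_top (K := R ⧸ m) Ideal.Quotient.mk_surjective hspan

theorem le_finrank_of_surjective_pi_s4 [Module.Finite R N] [Nontrivial N] {F : Type*}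
    [AddCommGroup F] [Module R F] [Module.Free R F] [Module.Finite R F] {g : F →ₗ[R] M}
    (hg : Function.Surjective g) {n : ℕ} {f : M →ₗ[R] (Fin n → N)}
    (hf : Function.Surjective f) : n ≤ finrank R F := by
  have := Module.nontrivial R N
  let b := Module.Free.chooseBasis R F
  have hs : span R (Set.range (g ∘ b)) = ⊤ := by
    rw [Set.range_comp, ← map_span, b.span_eq, Submodule.map_top, LinearMap.range_eq_top.mpr hg]
  rw [finrank_eq_card_chooseBasisIndex]
  exact le_card_of_surjective_pi hs hf

theorem surjNum_le_finrank [Module.Finite R N] [Nontrivial N] {F : Type*} [AddCommGroup F]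
    [Module R F] [Module.Free R F] [Module.Finite R F] {g : F →ₗ[R] M}
    (hg : Function.Surjective g) : surjNum R M N ≤ finrank R F :=
  csSup_le' fun _ ⟨_, hf⟩ => le_finrank_of_surjective_pi_s4 hg hf

theorem surjNum_pi_le_mul [Module.Finite R N] [Nontrivial N] {k : ℕ}
    {g : (Fin k → R) →ₗ[R] M} (hg : Function.Surjective g) (r : ℕ) :
    surjNum R (Fin r → M) N ≤ r * k := by
  have := Module.nontrivial R N
  have h := surjNum_le_finrank (N := N) (g := LinearMap.compLeft g (Fin r)) hg.comp_left
  simpa [Module.finrank_pi_fintype] using h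

theorem surjNum_congr (e : M ≃ₗ[R] M') : surjNum R M N = surjNum R M' N := by
  refine congrArg sSup (Set.ext fun n => ⟨fun ⟨f, hf⟩ => ?_, fun ⟨f, hf⟩ => ?_⟩)
  · exact ⟨f ∘ₗ e.symm.toLinearMap, hf.comp e.symm.surjective⟩
  · exact ⟨f ∘ₗ e.toLinearMap, hf.comp e.surjective⟩

variable [Module.Finite R M] [Module.Finite R N] [Nontrivial N]

theorem bddAbove_surjNum :
    BddAbove {n : ℕ | ∃ f : M →ₗ[R] (Fin n → N), Function.Surjective f} := by
  obtain ⟨k, g, hg⟩ := Module.Finite.exists_fin' R M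
  exact ⟨_, fun n ⟨f, hf⟩ => le_finrank_of_surjective_pi_s4 hg hf⟩

theorem exists_surjective_surjNum :
    ∃ f : M →ₗ[R] (Fin (surjNum R M N) → N), Function.Surjective f := by
  have h0 : ∃ f : M →ₗ[R] (Fin 0 → N), Function.Surjective f :=
    ⟨0, fun _ => ⟨0, Subsingleton.elim _ _⟩⟩
  exact Nat.sSup_mem ⟨0, h0⟩ bddAbove_surjNum

theorem le_surjNum {n : ℕ} {f : M →ₗ[R] (Fin n → N)} (hf : Function.Surjective f) :
    n ≤ surjNum R M N :=
  le_csSup bddAbove_surjNum ⟨f, hf⟩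

theorem surjNum_add_le_prod [Module.Finite R M'] :
    surjNum R M N + surjNum R M' N ≤ surjNum R (M × M') N := by
  obtain ⟨f, hf⟩ := exists_surjective_surjNum (R := R) (M := M) (N := N)
  obtain ⟨f', hf'⟩ := exists_surjective_surjNum (R := R) (M := M') (N := N)
  let e : ((Fin (surjNum R M N) → N) × (Fin (surjNum R M' N) → N)) ≃ₗ[R]
      (Fin (surjNum R M N + surjNum R M' N) → N) :=
    ((LinearEquiv.funCongrLeft R N finSumFinEquiv).trans
      (LinearEquiv.sumArrowLequivProdArrow _ _ R N)).symm
  exact le_surjNum (f := e.toLinearMap ∘ₗ f.prodMap f') (e.surjective.comp (hf.prodMap hf'))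

theorem surjNum_pi_add_le (p q : ℕ) :
    surjNum R (Fin p → M) N + surjNum R (Fin q → M) N ≤ surjNum R (Fin (p + q) → M) N := by
  rw [surjNum_congr ((LinearEquiv.funCongrLeft R M finSumFinEquiv).trans
    (LinearEquiv.sumArrowLequivProdArrow _ _ R M))]
  exact surjNum_add_le_prod

end surjNum

theorem exists_tendsto_div_of_superadditive {a : ℕ → ℝ} (hadd : ∀ p q, a p + a q ≤ a (p + q))
    {C : ℝ} (hC : ∀ n, a n ≤ n * C) :
    ∃ L : ℝ, Filter.Tendsto (fun n : ℕ => a n / n) Filter.atTop (nhds L) := by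
  have hsub : Subadditive (-a) := fun p q => by
    simp only [Pi.neg_apply]
    linarith [hadd p q]
  have hbdd : BddBelow (Set.range fun n : ℕ => (-a) n / n) := by
    refine ⟨-|C|, ?_⟩
    rintro _ ⟨n, rfl⟩
    rcases n.eq_zero_or_pos with rfl | hn
    · simp
    · calc -|C| ≤ -C := neg_le_neg (le_abs_self C)
        _ ≤ -a n / n := by
          rw [neg_div, neg_le_neg_iff, div_le_iff₀ (by positivity), mul_comm]
          exact hC n
  refine ⟨-hsub.lim, ?_⟩
  simpa [neg_div] using (hsub.tendsto_lim hbdd).neg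

theorem asn_exists_general
    {R : Type*} [CommRing R]
    {M N : Type*} [AddCommGroup M] [Module R M] [AddCommGroup N] [Module R N]
    [Module.Finite R M] [Module.Finite R N] (hN : Nontrivial N) :
    ∃ L : ℝ, Filter.Tendsto
      (fun r : ℕ => (surjNum R (Fin r → M) N : ℝ) / r) Filter.atTop (nhds L) := by
  obtain ⟨k, g, hg⟩ := Module.Finite.exists_fin' R M
  refine exists_tendsto_div_of_superadditive (C := k) (fun p q => ?_) (fun r => ?_)
  · exact_mod_cast surjNum_pi_add_le p q
  · exact_mod_cast surjNum_pi_le_mul hg r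

/-- Over a Noetherian ring, for finitely generated modules `M`, `N` with `N ≠ 0`,
the limit `lim_{r→∞} surj_N(M^{⊕r})/r` (the asymptotic surjective number `asn_N(M)`)
exists. -/
theorem asn_exists
    {R : Type*} [CommRing R] [IsNoetherianRing R]
    {M N : Type*} [AddCommGroup M] [Module R M] [AddCommGroup N] [Module R N]
    [Module.Finite R M] [Module.Finite R N] (hN : Nontrivial N) :
    ∃ L : ℝ, Filter.Tendsto
      (fun r : ℕ => (surjNum R (Fin r → M) N : ℝ) / r) Filter.atTop (nhds L) :=
  asn_exists_general hN
end

section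
/- Let R be a Noetherian commutative ring and let M and N be finitely generated R-modules with N ≠ 0. Let L be the limit of the sequence r ↦ surj_N(M^{⊕r})/r (i.e., L = asn_N(M)). Then for every natural number r ≥ 1 one has the inequalities surj_N(M) ≤ surj_N(M^{⊕r})/r ≤ L; that is, r · surj_N(M) ≤ surj_N(M^{⊕r}) and (surj_N(M^{⊕r}) : ℝ) ≤ r · L. -/
open Module Submodule Filter Topology

section FiniteBound

variable {R M N : Type*} [CommRing R] [AddCommGroup M] [Module R M]
  [AddCommGroup N] [Module R N]

theorem Module.exists_isMaximal_nontrivial_quotient_smul_top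
    [Module.Finite R N] [Nontrivial N] :
    ∃ m : Ideal R, m.IsMaximal ∧ Nontrivial (N ⧸ m • (⊤ : Submodule R N)) := by
  obtain ⟨p, hp⟩ := Module.nonempty_support_of_nontrivial (R := R) (M := N)
  obtain ⟨m, hm, hpm⟩ := Ideal.exists_le_maximal p.asIdeal p.isPrime.ne_top
  have hmem : (⟨m, hm.isPrime⟩ : PrimeSpectrum R) ∈
      support R (N ⧸ m • (⊤ : Submodule R N)) := by
    rw [Module.support_quotient]
    exact ⟨Module.mem_support_mono hpm hp, Set.Subset.rfl⟩
  exact ⟨m, hm, Module.nonempty_support_iff.mp ⟨_, hmem⟩⟩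

theorem Module.finrank_le_of_surjective_of_span_eq_top {K W : Type*} [Field K] [Algebra R K]
    [AddCommGroup W] [Module K W] [Module R W] [IsScalarTower R K W]
    (hK : Function.Surjective (algebraMap R K)) {t : ℕ} {v : Fin t → M}
    (hv : span R (Set.range v) = ⊤) {g : M →ₗ[R] W} (hg : Function.Surjective g) :
    finrank K W ≤ t := by
  have hspanR : span R (Set.range (g ∘ v)) = ⊤ := by
    rw [Set.range_comp, ← Submodule.map_span, hv, Submodule.map_top,
      LinearMap.range_eq_top.mpr hg]
  have hspanK : span K (Set.range (g ∘ v)) = ⊤ := by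
    rw [← Submodule.restrictScalars_eq_top_iff R, Submodule.restrictScalars_span R K hK, hspanR]
  simpa using finrank_le_of_span_eq_top hspanK

theorem le_of_surjective_pi_of_span_eq_top [Module.Finite R N] [Nontrivial N]
    {t : ℕ} {v : Fin t → M} (hv : span R (Set.range v) = ⊤)
    {n : ℕ} {f : M →ₗ[R] (Fin n → N)} (hf : Function.Surjective f) : n ≤ t := by
  obtain ⟨m, hm, hV⟩ := Module.exists_isMaximal_nontrivial_quotient_smul_top (R := R) (N := N)
  let : Field (R ⧸ m) := Ideal.Quotient.field m
  let V := N ⧸ m • (⊤ : Submodule R N)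
  have : Module.Finite (R ⧸ m) V := .of_restrictScalars_finite R (R ⧸ m) V
  let q : (Fin n → N) →ₗ[R] (Fin n → V) :=
    LinearMap.piMap fun _ => (m • ⊤ : Submodule R N).mkQ
  have hq : Function.Surjective q := Function.Surjective.piMap fun _ => mkQ_surjective _
  calc n ≤ n * finrank (R ⧸ m) V := Nat.le_mul_of_pos_right n finrank_pos
    _ = finrank (R ⧸ m) (Fin n → V) := by simp [Module.finrank_pi_fintype]
    _ ≤ t := finrank_le_of_surjective_of_span_eq_top Ideal.Quotient.mk_surjective hv
        (g := q ∘ₗ f) (hq.comp hf)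

theorem bddAbove_setOf_surjective_pi [Module.Finite R M] [Module.Finite R N] [Nontrivial N] :
    BddAbove {n : ℕ | ∃ f : M →ₗ[R] (Fin n → N), Function.Surjective f} := by
  obtain ⟨t, v, hv⟩ := Module.Finite.exists_fin (R := R) (M := M)
  exact ⟨t, fun _ ⟨_, hf⟩ => le_of_surjective_pi_of_span_eq_top hv hf⟩

end FiniteBound

noncomputable def LinearEquiv.piFinMul (R X : Type*) [CommRing R] [AddCommGroup X] [Module R X]
    (a b : ℕ) : (Fin (a * b) → X) ≃ₗ[R] (Fin a → Fin b → X) :=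
  (LinearEquiv.funCongrLeft R X finProdFinEquiv).trans (LinearEquiv.curry R X (Fin a) (Fin b))

namespace surjNum

variable {R M M' N : Type*} [CommRing R] [AddCommGroup M] [Module R M]
  [AddCommGroup M'] [Module R M'] [AddCommGroup N] [Module R N]

theorem le_of_surjective [Module.Finite R M] [Module.Finite R N] [Nontrivial N] {n : ℕ}
    {f : M →ₗ[R] (Fin n → N)} (hf : Function.Surjective f) : n ≤ surjNum R M N :=
  le_csSup bddAbove_setOf_surjective_pi ⟨f, hf⟩

-- When the set is unbounded, `sSup` is the junk value `0`, which is attained by the zero map.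
theorem exists_surjective :
    ∃ f : M →ₗ[R] (Fin (surjNum R M N) → N), Function.Surjective f := by
  have hzero : 0 ∈ {n : ℕ | ∃ f : M →ₗ[R] (Fin n → N), Function.Surjective f} :=
    ⟨0, fun _ => ⟨0, Subsingleton.elim _ _⟩⟩
  by_cases hbdd : BddAbove {n : ℕ | ∃ f : M →ₗ[R] (Fin n → N), Function.Surjective f}
  · exact Nat.sSup_mem ⟨0, hzero⟩ hbdd
  · rw [surjNum, Nat.sSup_of_not_bddAbove hbdd]
    exact hzero

theorem congr (e : M ≃ₗ[R] M') : surjNum R M N = surjNum R M' N := by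
  unfold surjNum
  congr 1
  ext n
  exact ⟨fun ⟨f, hf⟩ => ⟨f ∘ₗ e.symm.toLinearMap, hf.comp e.symm.surjective⟩,
    fun ⟨f, hf⟩ => ⟨f ∘ₗ e.toLinearMap, hf.comp e.surjective⟩⟩

section Finite

variable [Module.Finite R M] [Module.Finite R N] [Nontrivial N]

theorem mul_le_pi (r : ℕ) : r * surjNum R M N ≤ surjNum R (Fin r → M) N := by
  obtain ⟨f, hf⟩ := exists_surjective (R := R) (M := M) (N := N)
  let g : (Fin r → M) →ₗ[R] (Fin (r * surjNum R M N) → N) :=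
    (LinearEquiv.piFinMul R N r _).symm.toLinearMap ∘ₗ LinearMap.piMap fun _ => f
  exact le_of_surjective (f := g)
    ((LinearEquiv.piFinMul R N r _).symm.surjective.comp (Function.Surjective.piMap fun _ => hf))

theorem div_le_div_pi_mul (r : ℕ) {k : ℕ} (hk : 0 < k) :
    (surjNum R (Fin r → M) N : ℝ) / r ≤
      (surjNum R (Fin (k * r) → M) N : ℝ) / (k * r : ℕ) := by
  have hmul : (k * surjNum R (Fin r → M) N : ℝ) ≤ surjNum R (Fin (k * r) → M) N := by
    rw [congr (LinearEquiv.piFinMul R M k r)]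
    exact_mod_cast mul_le_pi k
  calc (surjNum R (Fin r → M) N : ℝ) / r = k * surjNum R (Fin r → M) N / (k * r) := by
        rw [mul_div_mul_left _ _ (by positivity)]
    _ ≤ surjNum R (Fin (k * r) → M) N / (k * r : ℕ) := by
        push_cast
        gcongr

end Finite

end surjNum

theorem le_of_tendsto_of_le_comp_mul {u : ℕ → ℝ} {L : ℝ} (hu : Tendsto u atTop (𝓝 L))
    {r : ℕ} (hr : 0 < r) (h : ∀ k, 0 < k → u r ≤ u (k * r)) : u r ≤ L :=
  ge_of_tendsto (hu.comp (tendsto_id.atTop_mul_const' hr))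
    (eventually_atTop.mpr ⟨1, h⟩)

theorem surjNum_le_nsurj_le_asn_general
    {R : Type*} [CommRing R]
    {M N : Type*} [AddCommGroup M] [Module R M] [AddCommGroup N] [Module R N]
    [Module.Finite R M] [Module.Finite R N] (hN : Nontrivial N)
    (L : ℝ)
    (hL : Filter.Tendsto
      (fun r : ℕ => (surjNum R (Fin r → M) N : ℝ) / r) Filter.atTop (nhds L))
    (r : ℕ) (hr : 1 ≤ r) :
    r * surjNum R M N ≤ surjNum R (Fin r → M) N ∧
      (surjNum R (Fin r → M) N : ℝ) ≤ r * L := by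
  refine ⟨surjNum.mul_le_pi r, ?_⟩
  have hdiv := le_of_tendsto_of_le_comp_mul hL hr fun k hk => surjNum.div_le_div_pi_mul r hk
  rwa [div_le_iff₀ (by positivity), mul_comm] at hdiv

/-- If `L = asn_N(M)` is the limit of `surj_N(M^{⊕r})/r`, then for every `r ≥ 1`
one has `surj_N(M) ≤ surj_N(M^{⊕r})/r ≤ L`, i.e. `r · surj_N(M) ≤ surj_N(M^{⊕r})`
and `surj_N(M^{⊕r}) ≤ r · L`. -/
theorem surjNum_le_nsurj_le_asn
    {R : Type*} [CommRing R] [IsNoetherianRing R]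
    {M N : Type*} [AddCommGroup M] [Module R M] [AddCommGroup N] [Module R N]
    [Module.Finite R M] [Module.Finite R N] (hN : Nontrivial N)
    (L : ℝ)
    (hL : Filter.Tendsto
      (fun r : ℕ => (surjNum R (Fin r → M) N : ℝ) / r) Filter.atTop (nhds L))
    (r : ℕ) (hr : 1 ≤ r) :
    r * surjNum R M N ≤ surjNum R (Fin r → M) N ∧
      (surjNum R (Fin r → M) N : ℝ) ≤ r * L :=
  surjNum_le_nsurj_le_asn_general hN L hL r hr
end

section
/- Let k be a field, Λ a finite-dimensional selfinjective k-algebra (Λ is injective as a left module over itself), L a simple left Λ-module, and h : P → L a projective cover of L (P is a projective Λ-module, h is surjective, and ker h is superfluous in P, meaning that for any submodule X of P, X + ker h = P implies X = P). Let M be a finitely generated indecomposable Λ-module. Then the following are equivalent: (1) Ext¹_Λ(M, ker h) = 0; (2) the induced map h_* : Hom_Λ(M, P) → Hom_Λ(M, L) is surjective; (3) M is projective or Hom_Λ(M, L) = 0. -/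
open CategoryTheory

/-- A module is indecomposable if it is nonzero and admits no nontrivial direct sum
decomposition. -/
def IsIndecomposableModule (Λ M : Type*) [Ring Λ] [AddCommGroup M] [Module Λ M] : Prop :=
  Nontrivial M ∧ ∀ X Y : Submodule Λ M, IsCompl X Y → X = ⊥ ∨ Y = ⊥

/-!
Because `L` is cyclic and `ker h` is superfluous, `P` is cyclic; being projective it is a
direct summand of `Λ`, hence injective. The sequence `0 → ker h → P → L → 0` then gives the
exact sequence `Hom(M, P) → Hom(M, L) → Ext¹(M, ker h) → Ext¹(M, P) = 0`, which is (1) ⇔ (2).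
Since `Ext` is computed from a projective resolution `A₂ → A₁ → A₀ → M`, this exactness is
checked by a diagram chase using that `A₀` is projective and `P` is injective.

For (2) ⇒ (3), a lift `ψ : M → P` of a nonzero `φ : M → L` has `h ∘ ψ` surjective (`L` is
simple), so `ψ` is surjective because `ker h` is superfluous. It splits since `P` is
projective, and as `M` is indecomposable it is an isomorphism.
-/

universe u

namespace LinearMap

variable {Λ : Type*} [Ring Λ] {M N Q : Type*} [AddCommGroup M] [Module Λ M]
  [AddCommGroup N] [Module Λ N] [AddCommGroup Q] [Module Λ Q]

theorem exists_comp_eq_of_ker_le {f : M →ₗ[Λ] N} (hf : Function.Surjective f)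
    {g : M →ₗ[Λ] Q} (hle : ker f ≤ ker g) : ∃ e : N →ₗ[Λ] Q, e ∘ₗ f = g := by
  refine ⟨(ker f).liftQ g hle ∘ₗ (f.quotKerEquivOfSurjective hf).symm.toLinearMap, ?_⟩
  ext x
  have : (f.quotKerEquivOfSurjective hf).symm (f x) = Submodule.Quotient.mk x := by
    rw [LinearEquiv.symm_apply_eq]; rfl
  simp [this]

theorem surjective_of_surjective_comp_of_superfluous_ker {h : N →ₗ[Λ] Q}
    (hsmall : ∀ X : Submodule Λ N, X ⊔ ker h = ⊤ → X = ⊤) {f : M →ₗ[Λ] N}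
    (hf : Function.Surjective (h ∘ₗ f)) : Function.Surjective f := by
  have hh : range h = ⊤ := range_eq_top.2 (Function.Surjective.of_comp hf)
  rw [← range_eq_top]
  apply hsmall
  rw [← map_eq_top_iff hh, ← range_comp, range_eq_top.2 hf]

theorem exists_toSpanSingleton_surjective_of_superfluous_ker [IsSimpleModule Λ Q]
    {h : N →ₗ[Λ] Q} (hh : Function.Surjective h)
    (hsmall : ∀ X : Submodule Λ N, X ⊔ ker h = ⊤ → X = ⊤) :
    ∃ n : N, Function.Surjective (toSpanSingleton Λ N n) := by
  have := IsSimpleModule.nontrivial Λ Q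
  obtain ⟨q, hq⟩ := exists_ne (0 : Q)
  obtain ⟨n, rfl⟩ := hh q
  refine ⟨n, surjective_of_surjective_comp_of_superfluous_ker hsmall ?_⟩
  rw [comp_toSpanSingleton]
  exact IsSimpleModule.toSpanSingleton_surjective Λ hq

end LinearMap

theorem Module.Injective.of_surjective {Λ : Type*} [Ring Λ] {Q P : Type u}
    [AddCommGroup Q] [Module Λ Q] [AddCommGroup P] [Module Λ P]
    [hQ : Module.Injective Λ Q] [Module.Projective Λ P] {f : Q →ₗ[Λ] P}
    (hf : Function.Surjective f) : Module.Injective Λ P := by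
  obtain ⟨s, hs⟩ := Module.projective_lifting_property f LinearMap.id hf
  refine ⟨fun X Y _ _ _ _ i hi g => ?_⟩
  obtain ⟨G, hG⟩ := hQ.out i hi (s ∘ₗ g)
  refine ⟨f ∘ₗ G, fun x => ?_⟩
  simp [hG, ← LinearMap.comp_apply f s, hs]

namespace IsIndecomposableModule

variable {Λ : Type*} [Ring Λ] {M N P L : Type*} [AddCommGroup M] [Module Λ M]
  [AddCommGroup N] [Module Λ N] [AddCommGroup P] [Module Λ P] [AddCommGroup L] [Module Λ L]

theorem injective_of_comp_eq_id (hM : IsIndecomposableModule Λ M) [Nontrivial N]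
    {f : M →ₗ[Λ] N} {s : N →ₗ[Λ] M} (hfs : f ∘ₗ s = LinearMap.id) : Function.Injective f := by
  have hfs' (n : N) : f (s n) = n := LinearMap.congr_fun hfs n
  have hidem : IsIdempotentElem (s ∘ₗ f) := by
    ext x; simp [hfs']
  rcases hM.2 _ _ (LinearMap.IsIdempotentElem.isCompl hidem) with hrange | hker
  · obtain ⟨n, hn⟩ := exists_ne (0 : N)
    have hsf : s (f (s n)) = 0 := by
      simpa using LinearMap.congr_fun (LinearMap.range_eq_bot.1 hrange) (s n)
    exact absurd (by rw [← hfs' n, ← hfs' n, hsf, map_zero]) hn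
  · exact Function.Injective.of_comp (f := s) (LinearMap.ker_eq_bot.1 hker)

theorem projective_of_surjective_comp_of_superfluous_ker (hM : IsIndecomposableModule Λ M)
    [Module.Projective Λ P] [Nontrivial P] {h : P →ₗ[Λ] L}
    (hsmall : ∀ X : Submodule Λ P, X ⊔ LinearMap.ker h = ⊤ → X = ⊤) {ψ : M →ₗ[Λ] P}
    (hψ : Function.Surjective (h ∘ₗ ψ)) : Module.Projective Λ M := by
  have hsurj := LinearMap.surjective_of_surjective_comp_of_superfluous_ker hsmall hψ
  obtain ⟨s, hs⟩ := Module.projective_lifting_property ψ LinearMap.id hsurj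
  have hinj := hM.injective_of_comp_eq_id hs
  exact Module.Projective.of_equiv (LinearEquiv.ofBijective ψ ⟨hinj, hsurj⟩).symm

theorem exists_lift_iff_projective_or_forall_eq_zero (hM : IsIndecomposableModule Λ M)
    [IsSimpleModule Λ L] [Module.Projective Λ P] {h : P →ₗ[Λ] L} (hh : Function.Surjective h)
    (hsmall : ∀ X : Submodule Λ P, X ⊔ LinearMap.ker h = ⊤ → X = ⊤) :
    (∀ φ : M →ₗ[Λ] L, ∃ ψ : M →ₗ[Λ] P, h ∘ₗ ψ = φ) ↔
      Module.Projective Λ M ∨ ∀ φ : M →ₗ[Λ] L, φ = 0 := by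
  constructor
  · intro hlift
    refine or_iff_not_imp_right.2 fun hne => ?_
    obtain ⟨φ, hφ⟩ := not_forall.1 hne
    obtain ⟨ψ, rfl⟩ := hlift φ
    have := IsSimpleModule.nontrivial Λ L
    have : Nontrivial P := hh.nontrivial
    exact hM.projective_of_surjective_comp_of_superfluous_ker hsmall
      (LinearMap.surjective_of_ne_zero hφ)
  · rintro (hproj | hzero) φ
    · exact Module.projective_lifting_property h φ hh
    · exact ⟨0, by rw [hzero φ, LinearMap.comp_zero]⟩

end IsIndecomposableModule

theorem CategoryTheory.ProjectiveResolution.subsingleton_ext_one_iff {R : Type*} [Ring R]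
    {C : Type*} [Category C] [Abelian C] [Linear R C] [EnoughProjectives C] {X : C}
    (PR : ProjectiveResolution X) (Y : C) :
    Subsingleton (((Ext R C 1).obj (Opposite.op X)).obj Y) ↔
      ∀ β : PR.complex.X 1 ⟶ Y, PR.complex.d 2 1 ≫ β = 0 →
        ∃ γ : PR.complex.X 0 ⟶ Y, PR.complex.d 1 0 ≫ γ = β := by
  let K := PR.complex.linearYonedaObj R Y
  calc Subsingleton (((Ext R C 1).obj (Opposite.op X)).obj Y)
      ↔ Subsingleton (K.homology 1) :=
        ((forget (ModuleCat R)).mapIso (PR.isoExt 1 Y)).toEquiv.subsingleton_congr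
    _ ↔ (K.sc' 0 1 2).Exact := by
        rw [← ModuleCat.isZero_iff_subsingleton, ← HomologicalComplex.exactAt_iff_isZero_homology,
          HomologicalComplex.exactAt_iff' K 0 1 2 (by simp) (by simp)]
    _ ↔ _ := ShortComplex.moduleCat_exact_iff _

theorem CategoryTheory.ProjectiveResolution.subsingleton_ext_one_iff_linearMap {R : Type*} [Ring R]
    {Λ : Type u} [Ring Λ] [Linear R (ModuleCat.{u} Λ)] {X : ModuleCat.{u} Λ}
    (PR : ProjectiveResolution X) (Y : Type u) [AddCommGroup Y] [Module Λ Y] :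
    Subsingleton (((Ext R (ModuleCat Λ) 1).obj (Opposite.op X)).obj (ModuleCat.of Λ Y)) ↔
      ∀ β : PR.complex.X 1 →ₗ[Λ] Y, β ∘ₗ (PR.complex.d 2 1).hom = 0 →
        ∃ γ : PR.complex.X 0 →ₗ[Λ] Y, γ ∘ₗ (PR.complex.d 1 0).hom = β := by
  rw [PR.subsingleton_ext_one_iff]
  constructor
  · intro H β hβ
    obtain ⟨γ, hγ⟩ := H (ModuleCat.ofHom β) (ModuleCat.hom_ext hβ)
    exact ⟨γ.hom, congrArg ModuleCat.Hom.hom hγ⟩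
  · intro H β hβ
    obtain ⟨γ, hγ⟩ := H β.hom (congrArg ModuleCat.Hom.hom hβ)
    exact ⟨ModuleCat.ofHom γ, ModuleCat.hom_ext hγ⟩

section

variable {Λ : Type*} [Ring Λ] {P : Type u} {L : Type*} [AddCommGroup P] [Module Λ P]
  [AddCommGroup L] [Module Λ L] {h : P →ₗ[Λ] L}
  {M A₁ A₂ : Type*} {A₀ : Type u} [AddCommGroup M] [Module Λ M] [AddCommGroup A₀] [Module Λ A₀]
  [AddCommGroup A₁] [Module Λ A₁] [AddCommGroup A₂] [Module Λ A₂]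
  {d₂ : A₂ →ₗ[Λ] A₁} {d₁ : A₁ →ₗ[Λ] A₀} {π : A₀ →ₗ[Λ] M}

theorem exists_lift_of_forall_exists_comp_eq [Module.Projective Λ A₀]
    (hh : Function.Surjective h) (hπ : Function.Surjective π) (h₀ : Function.Exact d₁ π)
    (hd : d₁ ∘ₗ d₂ = 0)
    (hext : ∀ β : A₁ →ₗ[Λ] LinearMap.ker h, β ∘ₗ d₂ = 0 →
      ∃ γ : A₀ →ₗ[Λ] LinearMap.ker h, γ ∘ₗ d₁ = β)
    (φ : M →ₗ[Λ] L) : ∃ ψ : M →ₗ[Λ] P, h ∘ₗ ψ = φ := by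
  obtain ⟨G, hG⟩ := Module.projective_lifting_property h (φ ∘ₗ π) hh
  have hGd₁ (x : A₁) : G (d₁ x) ∈ LinearMap.ker h := by
    simp [← LinearMap.comp_apply h G, hG, h₀.apply_apply_eq_zero]
  obtain ⟨γ, hγ⟩ := hext (LinearMap.codRestrict _ (G ∘ₗ d₁) hGd₁) (by
    ext x; simp [← LinearMap.comp_apply d₁ d₂, hd])
  obtain ⟨ψ, hψ⟩ := LinearMap.exists_comp_eq_of_ker_le hπ
    (g := G - (LinearMap.ker h).subtype ∘ₗ γ) (by
      rw [h₀.linearMap_ker_eq]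
      rintro _ ⟨x, rfl⟩
      simp [← LinearMap.comp_apply γ d₁, hγ])
  refine ⟨ψ, (LinearMap.cancel_right hπ).1 ?_⟩
  rw [LinearMap.comp_assoc, hψ, ← hG]
  ext a
  simp

theorem exists_comp_eq_of_forall_exists_lift [hP : Module.Injective Λ P]
    (hπ : Function.Surjective π) (h₀ : Function.Exact d₁ π) (h₁ : Function.Exact d₂ d₁)
    (hlift : ∀ φ : M →ₗ[Λ] L, ∃ ψ : M →ₗ[Λ] P, h ∘ₗ ψ = φ)
    (β : A₁ →ₗ[Λ] LinearMap.ker h) (hβ : β ∘ₗ d₂ = 0) :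
    ∃ γ : A₀ →ₗ[Λ] LinearMap.ker h, γ ∘ₗ d₁ = β := by
  obtain ⟨α, hα⟩ := LinearMap.exists_comp_eq_of_ker_le d₁.surjective_rangeRestrict
    (g := (LinearMap.ker h).subtype ∘ₗ β) (by
      rw [LinearMap.ker_rangeRestrict, h₁.linearMap_ker_eq]
      rintro _ ⟨x, rfl⟩
      simp [← LinearMap.comp_apply β d₂, hβ])
  obtain ⟨g, hg⟩ := hP.out _ (LinearMap.range d₁).injective_subtype α
  have hgd₁ (x : A₁) : g (d₁ x) = β x := by
    simpa [← LinearMap.comp_apply α, hα] using hg (d₁.rangeRestrict x)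
  obtain ⟨φ, hφ⟩ := LinearMap.exists_comp_eq_of_ker_le hπ (g := h ∘ₗ g) (by
    rw [h₀.linearMap_ker_eq]
    rintro _ ⟨x, rfl⟩
    simp [hgd₁])
  obtain ⟨ψ, hψ⟩ := hlift φ
  have hγ (a : A₀) : g a - ψ (π a) ∈ LinearMap.ker h := by
    simp [← LinearMap.comp_apply h ψ, hψ, ← LinearMap.comp_apply φ π, hφ]
  refine ⟨LinearMap.codRestrict _ (g - ψ ∘ₗ π) hγ, ?_⟩
  ext x
  simp [hgd₁, h₀.apply_apply_eq_zero]

end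

theorem subsingleton_ext_one_ker_iff_forall_exists_lift {Λ : Type u} [Ring Λ]
    {P L M : Type u} [AddCommGroup P] [Module Λ P] [AddCommGroup L] [Module Λ L]
    [AddCommGroup M] [Module Λ M] [Module.Injective Λ P] {h : P →ₗ[Λ] L}
    (hh : Function.Surjective h) :
    Subsingleton (((Ext ℤ (ModuleCat Λ) 1).obj
        (Opposite.op (ModuleCat.of Λ M))).obj (ModuleCat.of Λ (LinearMap.ker h))) ↔
      ∀ φ : M →ₗ[Λ] L, ∃ ψ : M →ₗ[Λ] P, h ∘ₗ ψ = φ := by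
  obtain ⟨PR⟩ := HasProjectiveResolution.out (Z := ModuleCat.of Λ M)
  let π : PR.complex.X 0 ⟶ ModuleCat.of Λ M := PR.π.f 0
  have hπ : Function.Surjective π.hom :=
    (ModuleCat.epi_iff_surjective π).1 (inferInstanceAs (Epi (PR.π.f 0)))
  have h₀ : Function.Exact (PR.complex.d 1 0).hom π.hom :=
    (ShortComplex.ShortExact.moduleCat_exact_iff_function_exact _).1 PR.exact₀
  have h₁ : Function.Exact (PR.complex.d 2 1).hom (PR.complex.d 1 0).hom :=
    (ShortComplex.ShortExact.moduleCat_exact_iff_function_exact _).1 (PR.exact_succ 0)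
  rw [PR.subsingleton_ext_one_iff_linearMap]
  exact ⟨exists_lift_of_forall_exists_comp_eq hh hπ h₀ h₁.linearMap_comp_eq_zero,
    exists_comp_eq_of_forall_exists_lift hπ h₀ h₁⟩

theorem selfinjective_ext_vanishing_tfae_general
    (Λ : Type) [Ring Λ]
    (hself : Module.Injective Λ Λ)
    (L : Type) [AddCommGroup L] [Module Λ L] (hL : IsSimpleModule Λ L)
    (P : Type) [AddCommGroup P] [Module Λ P] [Module.Projective Λ P]
    (h : P →ₗ[Λ] L) (hsurj : Function.Surjective h)
    (hsmall : ∀ X : Submodule Λ P, X ⊔ LinearMap.ker h = ⊤ → X = ⊤)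
    (M : Type) [AddCommGroup M] [Module Λ M]
    (hM : IsIndecomposableModule Λ M) :
    (Subsingleton (((Ext ℤ (ModuleCat Λ) 1).obj
        (Opposite.op (ModuleCat.of Λ M))).obj (ModuleCat.of Λ (LinearMap.ker h))) ↔
      ∀ φ : M →ₗ[Λ] L, ∃ ψ : M →ₗ[Λ] P, h ∘ₗ ψ = φ) ∧
    ((∀ φ : M →ₗ[Λ] L, ∃ ψ : M →ₗ[Λ] P, h ∘ₗ ψ = φ) ↔
      (Module.Projective Λ M ∨ ∀ φ : M →ₗ[Λ] L, φ = 0)) := by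
  have := hself
  have := hL
  obtain ⟨p, hp⟩ := LinearMap.exists_toSpanSingleton_surjective_of_superfluous_ker hsurj hsmall
  have : Module.Injective Λ P := Module.Injective.of_surjective hp
  exact ⟨subsingleton_ext_one_ker_iff_forall_exists_lift hsurj,
    hM.exists_lift_iff_projective_or_forall_eq_zero hsurj hsmall⟩

/-- Let `Λ` be a finite-dimensional selfinjective `k`-algebra, `L` a simple
`Λ`-module, `h : P → L` a projective cover (`P` projective, `h` surjective with
superfluous kernel) and `M` a finitely generated indecomposable `Λ`-module.
Then the following are equivalent:
(1) `Ext¹_Λ(M, ker h) = 0`;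
(2) `h₊ : Hom_Λ(M, P) → Hom_Λ(M, L)` is surjective;
(3) `M` is projective or `Hom_Λ(M, L) = 0`. -/
theorem selfinjective_ext_vanishing_tfae
    (k : Type) [Field k] (Λ : Type) [Ring Λ] [Algebra k Λ] [FiniteDimensional k Λ]
    (hself : Module.Injective Λ Λ)
    (L : Type) [AddCommGroup L] [Module Λ L] (hL : IsSimpleModule Λ L)
    (P : Type) [AddCommGroup P] [Module Λ P] [Module.Projective Λ P]
    (h : P →ₗ[Λ] L) (hsurj : Function.Surjective h)
    (hsmall : ∀ X : Submodule Λ P, X ⊔ LinearMap.ker h = ⊤ → X = ⊤)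
    (M : Type) [AddCommGroup M] [Module Λ M] [Module.Finite Λ M]
    (hM : IsIndecomposableModule Λ M) :
    (Subsingleton (((Ext ℤ (ModuleCat Λ) 1).obj
        (Opposite.op (ModuleCat.of Λ M))).obj (ModuleCat.of Λ (LinearMap.ker h))) ↔
      ∀ φ : M →ₗ[Λ] L, ∃ ψ : M →ₗ[Λ] P, h ∘ₗ ψ = φ) ∧
    ((∀ φ : M →ₗ[Λ] L, ∃ ψ : M →ₗ[Λ] P, h ∘ₗ ψ = φ) ↔
      (Module.Projective Λ M ∨ ∀ φ : M →ₗ[Λ] L, φ = 0)) :=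
  selfinjective_ext_vanishing_tfae_general Λ hself L hL P h hsurj hsmall M hM
end

section
/- Let p be an odd prime, r ≥ 1 a natural number, and k an algebraically closed field of characteristic p. Let G be the subgroup of the symmetric group on F_p consisting of all affine permutations x ↦ ax + b with a ∈ F_p^×, b ∈ F_p, and let G act on the polynomial ring B = k[w_{x,j} : x ∈ F_p, 1 ≤ j ≤ r] by permuting the first index of the variables: φ·w_{x,j} = w_{φ(x),j}. If M is a finitely generated (equivalently, finite-dimensional over k) indecomposable kG-module that occurs as a kG-module direct summand of B and is not projective as a kG-module, then M is isomorphic to the one-dimensional trivial representation k. -/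
/-- The group of affine permutations `x ↦ ax + b` of `Z/pZ`. -/
def affineGroup (p : ℕ) : Subgroup (Equiv.Perm (ZMod p)) where
  carrier := {φ | ∃ a : (ZMod p)ˣ, ∃ b : ZMod p, ∀ x, φ x = a * x + b}
  one_mem' := ⟨1, 0, fun x => by simp⟩
  mul_mem' := by
    rintro φ ψ ⟨a, b, hφ⟩ ⟨c, d, hψ⟩
    refine ⟨a * c, a * d + b, fun x => ?_⟩
    simp only [Equiv.Perm.mul_apply, hφ, hψ, Units.val_mul]
    ring
  inv_mem' := by
    rintro φ ⟨a, b, hφ⟩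
    refine ⟨a⁻¹, -(↑a⁻¹ * b), fun x => ?_⟩
    apply φ.injective
    rw [show φ (φ⁻¹ x) = x from φ.apply_symm_apply x, hφ]
    symm
    have ha : (a : ZMod p) * (a⁻¹ : (ZMod p)ˣ) = 1 := by
      rw [← Units.val_mul, mul_inv_cancel]; simp
    calc (a : ZMod p) * ((a⁻¹ : (ZMod p)ˣ) * x + -((a⁻¹ : (ZMod p)ˣ) * b)) + b
        = ((a : ZMod p) * (a⁻¹ : (ZMod p)ˣ)) * x
          + (-(((a : ZMod p) * (a⁻¹ : (ZMod p)ˣ)) * b) + b) := by ring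
      _ = x := by rw [ha]; ring

/-!
The monomials form a basis of `B` permuted by `G`. An element of order `p` of the affine group is
a nontrivial translation, whose powers are all the translations; so a monomial whose stabilizer
has order divisible by `p` is constant along the first index and is fixed by `G`. The remaining
monomials have stabilizers of order prime to `p`, and averaging over the stabilizers maps their
span into a free `kG`-module. This gives an equivariant endomorphism `e` of `B` that factors
through a free module, with `1 - e` taking values in the invariants.

By Fitting's lemma the compression `f = π ∘ e ∘ ι` to an indecomposable summand `M` is nilpotent
or invertible. If it is invertible, `M` is a retract of a free module, hence projective. If it is
nilpotent, `1 - f` is invertible and `(1 - f) ∘ g = 1 - f` for every `g ∈ G`, so `G` acts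
trivially, and an indecomposable module with trivial action is one-dimensional.
-/

open MulAction
open scoped MonoidAlgebra

namespace MulAction

variable (G : Type*) {ι : Type*} [Group G] [MulAction G ι]

noncomputable def transporter [Finite G] (x y : ι) : Finset G :=
  (Set.toFinite {g : G | g • x = y}).toFinset

noncomputable def orbitRep (i : ι) : ι := (Quotient.mk (orbitRel G ι) i).out

variable {G}

lemma orbitRep_smul (g : G) (i : ι) : orbitRep G (g • i) = orbitRep G i :=
  congrArg Quotient.out (Quotient.sound (mem_orbit i g))

lemma exists_smul_orbitRep_eq (i : ι) : ∃ g : G, g • orbitRep G i = i := by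
  obtain ⟨g, hg⟩ := (Quotient.mk_out (s := orbitRel G ι) i : orbitRep G i ∈ orbit G i)
  exact ⟨g⁻¹, by rw [orbitRep, ← hg, inv_smul_smul]⟩

variable [Finite G] {x y : ι}

lemma mem_transporter {g : G} : g ∈ transporter G x y ↔ g • x = y :=
  Set.Finite.mem_toFinset _

lemma transporter_smul [DecidableEq G] (g : G) (x y : ι) :
    transporter G x (g • y) = (transporter G x y).image (g * ·) := by
  ext h
  simp only [Finset.mem_image, mem_transporter]
  refine ⟨fun hh => ⟨g⁻¹ * h, by rw [mul_smul, hh, inv_smul_smul], by group⟩, ?_⟩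
  rintro ⟨h, hh, rfl⟩
  rw [mul_smul, hh]

lemma card_transporter (hxy : ∃ g : G, g • x = y) :
    (transporter G x y).card = Nat.card (stabilizer G y) := by
  obtain ⟨g₀, rfl⟩ := hxy
  rw [transporter, ← Nat.card_eq_card_finite_toFinset]
  refine Nat.card_congr (Equiv.subtypeEquiv (Equiv.mulRight g₀⁻¹) fun g => ?_)
  simp [mem_stabilizer_iff, mul_smul]

end MulAction

namespace Representation

variable {k G V W M : Type*} [Field k] [Group G] [AddCommGroup V] [Module k V]
  [AddCommGroup W] [Module k W] [AddCommGroup M] [Module k M]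

def IsIndecomposable (ρ : Representation k G M) : Prop :=
  ∀ X Y : Submodule k M, (∀ g, ∀ m ∈ X, ρ g m ∈ X) → (∀ g, ∀ m ∈ Y, ρ g m ∈ Y) →
    IsCompl X Y → X = ⊥ ∨ Y = ⊥

lemma projective_of_retract {ρ : Representation k G M} {σ : Representation k G W}
    [Module.Projective k[G] σ.asModule] (s : IntertwiningMap ρ σ) (t : IntertwiningMap σ ρ)
    (hts : ∀ m, t (s m) = m) : Module.Projective k[G] ρ.asModule :=
  .of_split (IntertwiningMap.equivLinearMapAsModule ρ σ s)
    (IntertwiningMap.equivLinearMapAsModule σ ρ t) (LinearMap.ext hts)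

namespace IsIndecomposable

variable {ρ : Representation k G M}

lemma isNilpotent_or_bijective (hρ : IsIndecomposable ρ) [FiniteDimensional k M]
    (f : IntertwiningMap ρ ρ) :
    IsNilpotent f.toLinearMap ∨ Function.Bijective f := by
  obtain ⟨n, hn⟩ := Filter.eventually_atTop.mp
    (LinearMap.eventually_isCompl_ker_pow_range_pow f.toLinearMap)
  have hcomm (g : G) (m : M) :
      (f.toLinearMap ^ (n + 1)) (ρ g m) = ρ g ((f.toLinearMap ^ (n + 1)) m) :=
    LinearMap.congr_fun ((Commute.pow_left (f.isIntertwining' g) (n + 1)).eq) m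
  have hker (g : G) (m : M) (hm : m ∈ LinearMap.ker (f.toLinearMap ^ (n + 1))) :
      ρ g m ∈ LinearMap.ker (f.toLinearMap ^ (n + 1)) := by
    rw [LinearMap.mem_ker] at hm ⊢
    rw [hcomm, hm, map_zero]
  have hrange (g : G) (m : M) (hm : m ∈ LinearMap.range (f.toLinearMap ^ (n + 1))) :
      ρ g m ∈ LinearMap.range (f.toLinearMap ^ (n + 1)) := by
    obtain ⟨m, rfl⟩ := hm
    exact ⟨ρ g m, hcomm g m⟩
  rcases hρ _ _ hker hrange (hn (n + 1) n.le_succ) with hker | hrange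
  · have hinj : Function.Injective f := by
      rw [LinearMap.ker_eq_bot, pow_succ, Module.End.coe_mul] at hker
      exact hker.of_comp
    exact Or.inr ⟨hinj, LinearMap.injective_iff_surjective.mp hinj⟩
  · exact Or.inl ⟨n + 1, LinearMap.range_eq_bot.mp hrange⟩

lemma nonempty_linearEquiv (hρ : IsIndecomposable ρ) [Nontrivial M] [IsTrivial ρ] :
    Nonempty (M ≃ₗ[k] k) := by
  obtain ⟨m, hm⟩ := exists_ne (0 : M)
  obtain ⟨Y, hY⟩ := Submodule.exists_isCompl (k ∙ m)
  rcases hρ _ Y (fun g _ h => by rwa [isTrivial_apply]) (fun g _ h => by rwa [isTrivial_apply]) hY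
    with hm' | hY'
  · exact absurd (Submodule.span_singleton_eq_bot.mp hm') hm
  · have htop : k ∙ m = ⊤ := by simpa [hY'] using hY.codisjoint.eq_top
    exact ⟨((LinearEquiv.toSpanNonzeroSingleton k M m hm).trans
      (LinearEquiv.ofTop _ htop)).symm⟩

theorem isTrivial_of_not_projective (hρ : IsIndecomposable ρ) {ρV : Representation k G V}
    {ρW : Representation k G W} [Module.Projective k[G] ρW.asModule] (s : IntertwiningMap ρV ρW)
    (t : IntertwiningMap ρW ρV)
    (hst : ∀ v, v - t (s v) ∈ ρV.invariants) [FiniteDimensional k M]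
    (ι : IntertwiningMap ρ ρV) (π : IntertwiningMap ρV ρ) (hπι : ∀ m, π (ι m) = m)
    (hnp : ¬ Module.Projective k[G] ρ.asModule) : IsTrivial ρ := by
  let f := π.comp (t.comp (s.comp ι))
  rcases hρ.isNilpotent_or_bijective f with hnil | hbij
  · refine ⟨fun g => ?_⟩
    have hfix : (1 - f.toLinearMap) * ρ g = (1 - f.toLinearMap) * 1 := by
      ext m
      simp only [Module.End.mul_apply, LinearMap.sub_apply, Module.End.one_apply]
      calc ρ g m - f (ρ g m)
          = π (ρV g (ι m) - t (s (ρV g (ι m)))) := by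
            rw [map_sub, ← ι.isIntertwining, hπι]; rfl
        _ = π (ι m - t (s (ι m))) := by
            rw [s.isIntertwining, t.isIntertwining, ← map_sub, (mem_invariants _ _).mp (hst _)]
        _ = m - f m := by rw [map_sub, hπι]; rfl
    exact hnil.isUnit_one_sub.mul_left_cancel hfix
  · let E : ρ.Equiv ρ := .mk (LinearEquiv.ofBijective f.toLinearMap hbij) f.isIntertwining'
    exact absurd (projective_of_retract (s.comp ι) (E.symm.toIntertwiningMap.comp (π.comp t))
      E.symm_apply_apply) hnp

end IsIndecomposable

section PermutationModule

open Finsupp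

variable {k G ι V : Type*} [Field k] [Group G] [Finite G] [MulAction G ι]
  [AddCommGroup V] [Module k V]

/-- When the characteristic divides the order of the stabilizer of `i`, the inverse below is the
junk value `0`, so `toFree` kills `b i`. -/
noncomputable def toFree (b : Module.Basis ι k V) : V →ₗ[k] (ι →₀ k[G]) :=
  b.constr k fun i =>
    ((transporter G (orbitRep G i) i).card : k)⁻¹ • Finsupp.single (orbitRep G i)
      (∑ g ∈ transporter G (orbitRep G i) i, MonoidAlgebra.single g 1)

variable {ρ : Representation k G V} {b : Module.Basis ι k V}

lemma freeLift_toFree_basis (hb : ∀ g i, ρ g (b i) = b (g • i)) (i : ι) :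
    freeLift ρ b (toFree b (b i)) =
      (((transporter G (orbitRep G i) i).card : k)⁻¹ * (transporter G (orbitRep G i) i).card) •
        b i := by
  rw [toFree, Module.Basis.constr_basis, map_smul, Finsupp.single_finsetSum, map_sum,
    Finset.sum_congr rfl fun g hg => by
    rw [freeLift_single_single, one_smul, hb, mem_transporter.mp hg], Finset.sum_const,
    mul_smul, Nat.cast_smul_eq_nsmul]

lemma toFree_apply (hb : ∀ g i, ρ g (b i) = b (g • i)) (g : G) (v : V) :
    toFree b (ρ g v) = free k G ι g (toFree b v) := by
  classical
  suffices toFree b ∘ₗ ρ g = free k G ι g ∘ₗ toFree b from LinearMap.congr_fun this v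
  refine b.ext fun i => ?_
  simp only [LinearMap.comp_apply, hb, toFree, Module.Basis.constr_basis, orbitRep_smul,
    transporter_smul, map_smul, Finset.card_image_of_injective _ (mul_right_injective g),
    Finsupp.single_finsetSum, map_sum, free_single_single]
  rw [Finset.sum_image fun _ _ _ _ h => mul_right_injective g h]

noncomputable def toFreeHom (hb : ∀ g i, ρ g (b i) = b (g • i)) :
    IntertwiningMap ρ (free k G ι) :=
  (toFree b).intertwiningMap_of_isIntertwiningMap ρ (free k G ι) (toFree_apply hb)

lemma sub_freeLift_toFree_mem_invariants (hb : ∀ g i, ρ g (b i) = b (g • i))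
    (hfix : ∀ i : ι, (Nat.card (stabilizer G i) : k) = 0 → ∀ g : G, g • i = i) (v : V) :
    v - freeLift ρ b (toFree b v) ∈ ρ.invariants := by
  refine (mem_invariants _ _).mpr fun g => ?_
  suffices ρ g ∘ₗ (LinearMap.id - (freeLift ρ b).toLinearMap ∘ₗ toFree b) =
      LinearMap.id - (freeLift ρ b).toLinearMap ∘ₗ toFree b from LinearMap.congr_fun this v
  refine b.ext fun i => ?_
  have hcard := card_transporter (exists_smul_orbitRep_eq (G := G) i)
  simp only [LinearMap.comp_apply, LinearMap.sub_apply, LinearMap.id_apply,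
    IntertwiningMap.coe_toLinearMap, freeLift_toFree_basis hb, hcard]
  by_cases hn : (Nat.card (stabilizer G i) : k) = 0
  · rw [hn, mul_zero, zero_smul, sub_zero, hb, hfix i hn g]
  · rw [inv_mul_cancel₀ hn, one_smul, sub_self, map_zero]

end PermutationModule

end Representation

lemma Equiv.Perm.exists_pow_apply_eq_mul_add {R : Type*} [CommSemiring R] {φ : Equiv.Perm R}
    {a b : R} (h : ∀ z, φ z = a * z + b) (n : ℕ) :
    ∃ c, ∀ z, (φ ^ n) z = a ^ n * z + c := by
  induction n with
  | zero => exact ⟨0, by simp⟩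
  | succ n ih =>
    obtain ⟨c, hc⟩ := ih
    exact ⟨a * c + b, fun z => by rw [pow_succ', Equiv.Perm.mul_apply, hc, h]; ring⟩

attribute [local instance] Finsupp.comapMulAction

namespace affineGroup

variable {p : ℕ} {α : Type*}

instance : MulAction (affineGroup p) (ZMod p × α) where
  smul g q := ((g : Equiv.Perm (ZMod p)) q.1, q.2)
  one_smul _ := rfl
  mul_smul _ _ _ := rfl

lemma smul_def (g : affineGroup p) (q : ZMod p × α) :
    g • q = ((g : Equiv.Perm (ZMod p)) q.1, q.2) := rfl

lemma exists_coe_eq_addRight_of_orderOf_eq [Fact p.Prime] {x : affineGroup p}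
    (hx : orderOf x = p) : ∃ b ≠ 0, (x : Equiv.Perm (ZMod p)) = Equiv.addRight b := by
  obtain ⟨a, b, hab⟩ := x.2
  obtain ⟨c, hc⟩ := Equiv.Perm.exists_pow_apply_eq_mul_add hab p
  have hxp : (x : Equiv.Perm (ZMod p)) ^ p = 1 := by
    simpa [hx] using congrArg Subtype.val (pow_orderOf_eq_one x)
  -- by Fermat `a ^ p = a`, so `x ^ p = 1` forces `a = 1`
  simp only [hxp, Equiv.Perm.one_apply, ZMod.pow_card] at hc
  have ha : (a : ZMod p) = 1 := by
    have h0 := hc 0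
    have h1 := hc 1
    simp only [mul_zero, zero_add, mul_one] at h0 h1
    rw [← h0, add_zero] at h1
    exact h1.symm
  have hx_eq : (x : Equiv.Perm (ZMod p)) = Equiv.addRight b := by
    ext z; simp [hab, ha, add_comm]
  refine ⟨b, fun hb => ?_, hx_eq⟩
  have : x = 1 := Subtype.ext (by simp [hx_eq, hb])
  rw [this, orderOf_one] at hx
  exact (Fact.out : p.Prime).one_lt.ne hx

lemma smul_eq_self_of_forall_addRight {d : ZMod p × α →₀ ℕ}
    (h : ∀ c, ∃ y : affineGroup p, (y : Equiv.Perm (ZMod p)) = Equiv.addRight c ∧ y • d = d)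
    (g : affineGroup p) : g • d = d := by
  have hconst : ∀ z j, d (z, j) = d (0, j) := by
    intro z j
    obtain ⟨y, hy, hyd⟩ := h (-z)
    conv_rhs => rw [← hyd, Finsupp.comapSMul_apply, smul_def]
    simp [hy]
  ext ⟨z, j⟩
  rw [Finsupp.comapSMul_apply, smul_def, hconst, hconst z]

lemma smul_eq_self_of_dvd_card_stabilizer [Fact p.Prime] {d : ZMod p × α →₀ ℕ}
    (hd : p ∣ Nat.card (stabilizer (affineGroup p) d)) (g : affineGroup p) : g • d = d := by
  obtain ⟨y, hy⟩ := exists_prime_orderOf_dvd_card' p hd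
  obtain ⟨b, hb, hyb⟩ := exists_coe_eq_addRight_of_orderOf_eq (x := (y : affineGroup p))
    (by rw [Subgroup.orderOf_coe, hy])
  refine smul_eq_self_of_forall_addRight
    (fun c => ⟨(y ^ (c / b).val : stabilizer _ d), ?_, ?_⟩) g
  · rw [Subgroup.coe_pow, Subgroup.coe_pow, hyb, Equiv.nsmul_addRight, nsmul_eq_mul,
      ZMod.natCast_zmod_val, div_mul_cancel₀ c hb]
  · exact (y ^ (c / b).val).2

end affineGroup

open MvPolynomial Representation

theorem nonprojective_summand_of_B_is_trivial_general
    (p : ℕ) [Fact p.Prime]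
    (r : ℕ)
    (k : Type) [Field k] [CharP k p]
    (ρB : Representation k (affineGroup p) (MvPolynomial (ZMod p × Fin r) k))
    (hρ : ∀ g : affineGroup p, ρB g =
      (MvPolynomial.rename
        (fun q : ZMod p × Fin r => ((g : Equiv.Perm (ZMod p)) q.1, q.2))).toLinearMap)
    (M : Type) [AddCommGroup M] [Module k M]
    (ρM : Representation k (affineGroup p) M)
    (hfin : FiniteDimensional k M)
    (hnontriv : Nontrivial M)
    (hindec : ∀ X Y : Submodule k M,
      (∀ (g : affineGroup p), ∀ m ∈ X, ρM g m ∈ X) →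
      (∀ (g : affineGroup p), ∀ m ∈ Y, ρM g m ∈ Y) → IsCompl X Y → X = ⊥ ∨ Y = ⊥)
    (hsummand : ∃ (ι : M →ₗ[k] MvPolynomial (ZMod p × Fin r) k)
        (π : MvPolynomial (ZMod p × Fin r) k →ₗ[k] M),
      (∀ g m, ι (ρM g m) = ρB g (ι m)) ∧ (∀ g f, π (ρB g f) = ρM g (π f)) ∧
      π ∘ₗ ι = LinearMap.id)
    (hnotproj : ¬ Module.Projective (MonoidAlgebra k (affineGroup p)) ρM.asModule) :
    ∃ e : M ≃ₗ[k] k, ∀ (g : affineGroup p) (m : M), e (ρM g m) = e m := by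
  obtain ⟨ι, π, hι, hπ, hπι⟩ := hsummand
  have hb (g : affineGroup p) (d : ZMod p × Fin r →₀ ℕ) :
      ρB g (basisMonomials _ k d) = basisMonomials _ k (g • d) := by
    rw [coe_basisMonomials, hρ]
    exact rename_monomial _ _ _
  have hfix (d : ZMod p × Fin r →₀ ℕ) (hd : (Nat.card (stabilizer (affineGroup p) d) : k) = 0)
      (g : affineGroup p) : g • d = d :=
    affineGroup.smul_eq_self_of_dvd_card_stabilizer ((CharP.cast_eq_zero_iff k p _).mp hd) g
  have := free_asModule_free k (affineGroup p) (ZMod p × Fin r →₀ ℕ)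
  have : IsTrivial ρM :=
    IsIndecomposable.isTrivial_of_not_projective hindec
      (toFreeHom hb) (freeLift ρB _)
      (sub_freeLift_toFree_mem_invariants hb hfix)
      (ι.intertwiningMap_of_isIntertwiningMap _ _ hι)
      (π.intertwiningMap_of_isIntertwiningMap _ _ hπ) (LinearMap.congr_fun hπι) hnotproj
  obtain ⟨e⟩ := IsIndecomposable.nonempty_linearEquiv hindec
  exact ⟨e, fun g m => by rw [isTrivial_apply]⟩

/-- Let `p` be an odd prime, `r ≥ 1`, `k` an algebraically closed field of
characteristic `p`, and let the affine group `G = {x ↦ ax + b} ⊆ Perm(Z/pZ)` act on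
the polynomial ring `B = k[w_{x,j} : x ∈ Z/pZ, 1 ≤ j ≤ r]` by permuting the first
index of the variables.  If `M` is a finite-dimensional indecomposable `kG`-module
which occurs as a `kG`-module direct summand of `B` and is not projective over `kG`,
then `M` is isomorphic to the one-dimensional trivial representation `k`. -/
theorem nonprojective_summand_of_B_is_trivial
    (p : ℕ) [Fact p.Prime] (hodd : p ≠ 2)
    (r : ℕ) (hr : 1 ≤ r)
    (k : Type) [Field k] [IsAlgClosed k] [CharP k p]
    (ρB : Representation k (affineGroup p) (MvPolynomial (ZMod p × Fin r) k))
    (hρ : ∀ g : affineGroup p, ρB g =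
      (MvPolynomial.rename
        (fun q : ZMod p × Fin r => ((g : Equiv.Perm (ZMod p)) q.1, q.2))).toLinearMap)
    (M : Type) [AddCommGroup M] [Module k M]
    (ρM : Representation k (affineGroup p) M)
    (hfin : FiniteDimensional k M)
    (hnontriv : Nontrivial M)
    (hindec : ∀ X Y : Submodule k M,
      (∀ (g : affineGroup p), ∀ m ∈ X, ρM g m ∈ X) →
      (∀ (g : affineGroup p), ∀ m ∈ Y, ρM g m ∈ Y) → IsCompl X Y → X = ⊥ ∨ Y = ⊥)
    (hsummand : ∃ (ι : M →ₗ[k] MvPolynomial (ZMod p × Fin r) k)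
        (π : MvPolynomial (ZMod p × Fin r) k →ₗ[k] M),
      (∀ g m, ι (ρM g m) = ρB g (ι m)) ∧ (∀ g f, π (ρB g f) = ρM g (π f)) ∧
      π ∘ₗ ι = LinearMap.id)
    (hnotproj : ¬ Module.Projective (MonoidAlgebra k (affineGroup p)) ρM.asModule) :
    ∃ e : M ≃ₗ[k] k, ∀ (g : affineGroup p) (m : M), e (ρM g m) = e m :=
  nonprojective_summand_of_B_is_trivial_general p r k ρB hρ M ρM hfin hnontriv hindec hsummand
    hnotproj
end

section
/- Let k be a field, n ≥ 2 a natural number, and σ a permutation of an n-element set acting on the vector space k^n by permuting coordinates (equivalently, acting by the permutation matrix A_σ). Then rank(A_σ − I) = 1 if and only if σ is a transposition. In other words, a permutation acting on k^n by a permutation matrix is a pseudo-reflection if and only if it is a transposition. -/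
/-!
The range of `A_σ - 1` contains `e_{σ i} - e_i` for every `i`. If `σ` moves some `x` and also
some `y ∉ {x, σ x}`, then `e_{σ x} - e_x` and `e_{σ y} - e_y` are linearly independent (only the
second one is nonzero at `y`), so the rank is at least `2`. Otherwise `σ` is the identity (rank
`0`) or the transposition `(x σx)`. Conversely `(A_{(x y)} - 1) v = (v x - v y) • (e_y - e_x)`,
which has rank `1`.
-/

open Module Submodule

theorem Pi.single_one_sub_single_one_ne_zero {ι R : Type*} [DecidableEq ι] [Ring R]
    [Nontrivial R] {i j : ι} (hij : i ≠ j) : (Pi.single i 1 - Pi.single j 1 : ι → R) ≠ 0 := by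
  intro h
  simpa [hij] using congrFun h i

theorem linearIndependent_pair_of_apply_eq_zero {ι k : Type*} [DivisionRing k] {u w : ι → k}
    {i : ι} (hu : u ≠ 0) (hui : u i = 0) (hwi : w i ≠ 0) : LinearIndependent k ![u, w] :=
  (LinearIndependent.pair_iff' hu).mpr fun a h ↦ hwi (by rw [← h, Pi.smul_apply, hui, smul_zero])

namespace Equiv.Perm

variable {α : Type*} [DecidableEq α]

theorem eq_swap_of_forall_apply_ne_self {σ : Perm α} {x : α} (hx : σ x ≠ x)
    (h : ∀ y, σ y ≠ y → y ≠ x → y = σ x) : σ = swap x (σ x) := by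
  have hσσx : σ (σ x) = x := by
    by_contra hne
    exact hx (σ.injective (h _ (fun h' ↦ hx (σ.injective (σ.injective h'))) hne))
  ext z
  by_cases hzx : z = x
  · rw [hzx, swap_apply_left]
  by_cases hzσx : z = σ x
  · rw [hzσx, swap_apply_right, hσσx]
  rw [swap_apply_of_ne_of_ne hzx hzσx]
  by_contra hz
  exact hzσx (h z hz hzx)

theorem funLeft_inv_single {R M : Type*} [Semiring R] [AddCommMonoid M] [Module R M]
    (σ : Perm α) (i : α) (c : M) :
    LinearMap.funLeft R M ⇑σ⁻¹ (Pi.single i c) = Pi.single (σ i) c := by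
  ext j
  simp [LinearMap.funLeft_apply, Pi.single_apply, symm_apply_eq]

variable {k : Type*} [DivisionRing k]

theorem funLeft_swap_sub_self (x y : α) (v : α → k) :
    LinearMap.funLeft k k ⇑(swap x y) v - v = (v x - v y) • (Pi.single y 1 - Pi.single x 1) := by
  ext j
  simp only [LinearMap.funLeft_apply, Pi.sub_apply, Pi.smul_apply, Pi.single_apply,
    swap_apply_def, smul_eq_mul]
  split_ifs <;> simp_all

theorem rank_funLeft_swap_sub_id {x y : α} (hxy : x ≠ y) :
    LinearMap.rank (LinearMap.funLeft k k ⇑(swap x y)⁻¹ - LinearMap.id) = 1 := by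
  refine (rank_submodule_eq_one_iff _).mpr ⟨Pi.single y 1 - Pi.single x 1, ?_, ?_, ?_⟩
  · refine ⟨Pi.single x 1, ?_⟩
    rw [LinearMap.sub_apply, funLeft_inv_single, swap_apply_left, LinearMap.id_apply]
  · exact Pi.single_one_sub_single_one_ne_zero hxy.symm
  · rintro _ ⟨v, rfl⟩
    rw [LinearMap.sub_apply, LinearMap.id_apply, swap_inv, funLeft_swap_sub_self]
    exact smul_mem _ _ (mem_span_singleton_self _)

theorem two_le_rank_funLeft_inv_sub_id {σ : Perm α} {x y : α} (hx : σ x ≠ x) (hy : σ y ≠ y)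
    (hyx : y ≠ x) (hyσx : y ≠ σ x) :
    2 ≤ LinearMap.rank (LinearMap.funLeft k k ⇑σ⁻¹ - LinearMap.id) := by
  set f : (α → k) →ₗ[k] α → k := LinearMap.funLeft k k ⇑σ⁻¹ - LinearMap.id
  let v (i : α) : α → k := Pi.single (σ i) 1 - Pi.single i 1
  have hmem (i : α) : v i ∈ LinearMap.range f :=
    ⟨Pi.single i 1, by rw [LinearMap.sub_apply, funLeft_inv_single, LinearMap.id_apply]⟩
  have hli : LinearIndependent k ![v x, v y] := by
    refine linearIndependent_pair_of_apply_eq_zero (i := y)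
      (Pi.single_one_sub_single_one_ne_zero hx) ?_ ?_ <;> simp [v, hyx, hyσx, hy.symm]
  have hli' : LinearIndependent k ![(⟨v x, hmem x⟩ : LinearMap.range f), ⟨v y, hmem y⟩] :=
    .of_comp (LinearMap.range f).subtype <| by
      convert hli using 1
      ext i : 1
      fin_cases i <;> rfl
  simpa using hli'.cardinal_lift_le_rank

theorem isSwap_of_rank_funLeft_inv_sub_id_eq_one {σ : Perm α}
    (h : LinearMap.rank (LinearMap.funLeft k k ⇑σ⁻¹ - LinearMap.id) = 1) : σ.IsSwap := by
  obtain ⟨x, hx⟩ : ∃ x, σ x ≠ x := by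
    by_contra! hσ
    obtain rfl : σ = 1 := ext hσ
    rw [inv_one, coe_one, sub_eq_zero.mpr (LinearMap.ext (LinearMap.funLeft_id k k))] at h
    simp at h
  by_contra hσ
  obtain ⟨y, hy, hyx, hyσx⟩ : ∃ y, σ y ≠ y ∧ y ≠ x ∧ y ≠ σ x := by
    by_contra! h'
    exact hσ ⟨x, σ x, hx.symm, eq_swap_of_forall_apply_ne_self hx h'⟩
  have h2 := two_le_rank_funLeft_inv_sub_id (k := k) hx hy hyx hyσx
  rw [h] at h2
  norm_num at h2

end Equiv.Perm

theorem perm_pseudoReflection_iff_isSwap_general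
    (k : Type*) [Field k] (n : ℕ) (σ : Equiv.Perm (Fin n)) :
    LinearMap.rank ((LinearMap.funLeft k k ⇑σ⁻¹) - LinearMap.id) = 1 ↔
      σ.IsSwap :=
  ⟨Equiv.Perm.isSwap_of_rank_funLeft_inv_sub_id_eq_one, fun ⟨_, _, hxy, hσ⟩ ↦
    hσ ▸ Equiv.Perm.rank_funLeft_swap_sub_id hxy⟩

/-- A permutation `σ` of an `n`-element set (`n ≥ 2`) acting on `k^n` by the
permutation matrix `A_σ` (sending the `i`-th standard basis vector to the
`σ(i)`-th one, i.e. `(A_σ v) j = v (σ⁻¹ j)`) is a pseudo-reflection, i.e.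
`rank (A_σ − I) = 1`, if and only if `σ` is a transposition. -/
theorem perm_pseudoReflection_iff_isSwap
    (k : Type*) [Field k] (n : ℕ) (hn : 2 ≤ n) (σ : Equiv.Perm (Fin n)) :
    LinearMap.rank ((LinearMap.funLeft k k ⇑σ⁻¹) - LinearMap.id) = 1 ↔
      σ.IsSwap :=
  perm_pseudoReflection_iff_isSwap_general k n σ
end
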